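/- Let $0<p<1$, $\mu>0$, $\sigma>0$, $\beta>0$, $l>0$, $0<k<r$, and suppose $0<\kappa<k$ where $\kappa:=\frac{\beta-p\left(\frac{\mu^2}{2\sigma^2(1-p)}+r\right)}{1-p}$. Suppose $v:(0,\infty)\to\mathbb{R}$ is three times continuously differentiable, convex, satisfies $v'(y)<-\frac{l}{r-k}$ for all $y>0$, solves the dual ODE $\beta\big(v(y)-y\,v'(y)\big)-\frac{\mu^2}{2\sigma^2}y^2 v''(y)-G\big(-k\,v'(y)+l,\;y\big)+r\,y\,v'(y)=0$ for all $y>0$, and there exist $0<y_0\le y_1$ such that $v'(y)\le -\frac{1}{k}y^{1/(p-1)}+\frac{l}{k}$ for all $y\in(0,y_0]\cup[y_1,\infty)$. Then $v'(y)\le -\frac{1}{k}y^{1/(p-1)}+\frac{l}{k}$ for all $y>0$. -/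

import Mathlib

/-!
Put `g t = v' t + t ^ (1 / (p - 1)) / k`, so that the claim is `g ≤ l / k` on `(0, ∞)`.
Otherwise `g` exceeds `l / k` at a local maximum `z` strictly between `y₀` and `y₁`. Near `z`
the constraint is slack, so `G` takes its unconstrained value `(1 - p) / p * y ^ (p / (p - 1))`
and the ODE can be differentiated at `z`. Inserting `g' z = 0`, `g'' z ≤ 0` and `g z > l / k`
into the differentiated equation shows that its left side is at least
`(r l + (k - κ) z ^ (1 / (p - 1))) / k > 0`, a contradiction.
-/

open Real Set Topology Filter

noncomputable def G (p u y : ℝ) : ℝ :=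
  sSup ((fun c : ℝ => c ^ p / p - c * y) '' {c : ℝ | u ≤ c})

theorem ContDiffOn.hasDerivAt_deriv {𝕜 F : Type*} [NontriviallyNormedField 𝕜]
    [NormedAddCommGroup F] [NormedSpace 𝕜 F] {f : 𝕜 → F} {s : Set 𝕜} {n : WithTop ℕ∞}
    (hf : ContDiffOn 𝕜 n f s) (hs : IsOpen s) (hn : n ≠ 0) {x : 𝕜} (hx : x ∈ s) :
    HasDerivAt f (deriv f x) x :=
  ((hf.contDiffAt (hs.mem_nhds hx)).differentiableAt hn).hasDerivAt

theorem IsLocalMax.secondDeriv_nonpos {f f' : ℝ → ℝ} {f'' x₀ : ℝ} (h : IsLocalMax f x₀)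
    (hf : ∀ᶠ x in 𝓝 x₀, HasDerivAt f (f' x) x) (hf' : HasDerivAt f' f'' x₀) : f'' ≤ 0 := by
  have hderiv : deriv f =ᶠ[𝓝 x₀] f' := hf.mono fun x hx => hx.deriv
  have hf''_eq : deriv (deriv f) x₀ = f'' := by rw [hderiv.deriv_eq, hf'.deriv]
  -- if `f'' > 0`, the second derivative test makes `x₀` a local minimum as well, so `f` is
  -- locally constant and `f'' = 0`
  by_contra! hpos
  have hmin : IsLocalMin f x₀ :=
    isLocalMin_of_deriv_deriv_pos (hf''_eq ▸ hpos) h.deriv_eq_zero hf.self_of_nhds.continuousAt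
  have hconst : f =ᶠ[𝓝 x₀] fun _ => f x₀ := by
    filter_upwards [h, hmin] with x hmax hmin using le_antisymm hmax hmin
  have : deriv (deriv f) x₀ = 0 := by
    rw [(hconst.deriv.trans (Eventually.of_forall fun x => deriv_const x (f x₀))).deriv_eq]
    exact deriv_const x₀ 0
  linarith

theorem exists_isLocalMax_gt_of_le_endpoints {g : ℝ → ℝ} {a b c y : ℝ}
    (hg : ContinuousOn g (Icc a b)) (ha : g a ≤ c) (hb : g b ≤ c) (hy : y ∈ Icc a b)
    (hgy : c < g y) : ∃ z ∈ Ioo a b, IsLocalMax g z ∧ c < g z := by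
  obtain ⟨z, hz, hzmax⟩ := isCompact_Icc.exists_isMaxOn ⟨y, hy⟩ hg
  have hgz : c < g z := hgy.trans_le (hzmax hy)
  have hza : a < z := hz.1.lt_of_ne (by rintro rfl; linarith)
  have hzb : z < b := hz.2.lt_of_ne (by rintro rfl; linarith)
  exact ⟨z, ⟨hza, hzb⟩, hzmax.isLocalMax (Icc_mem_nhds hza hzb), hgz⟩

theorem IsLocalMax.mul_deriv_eq_and_sq_mul_deriv_deriv_le {w : ℝ → ℝ} {m k z : ℝ}
    (hmax : IsLocalMax (fun t => w t + t ^ m / k) z) (hk : 0 < k) (hz : 0 < z)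
    (hw : ∀ᶠ t in 𝓝 z, HasDerivAt w (deriv w t) t)
    (hw' : HasDerivAt (deriv w) (deriv (deriv w) z) z) :
    z * deriv w z = -(m / k) * z ^ m ∧
      z ^ 2 * deriv (deriv w) z ≤ -(m * (m - 1) / k) * z ^ m := by
  have hpow : ∀ᶠ t in 𝓝 z, HasDerivAt (fun t => t ^ m / k) (m * t ^ (m - 1) / k) t := by
    filter_upwards [eventually_gt_nhds hz] with t ht
    exact (hasDerivAt_rpow_const (Or.inl ht.ne')).div_const k
  have hf : ∀ᶠ t in 𝓝 z,
      HasDerivAt (fun t => w t + t ^ m / k) (deriv w t + m * t ^ (m - 1) / k) t := by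
    filter_upwards [hw, hpow] with t h1 h2 using h1.add h2
  have hf' : HasDerivAt (fun t => deriv w t + m * t ^ (m - 1) / k)
      (deriv (deriv w) z + m * ((m - 1) * z ^ (m - 1 - 1)) / k) z :=
    hw'.add (((hasDerivAt_rpow_const (Or.inl hz.ne')).const_mul m).div_const k)
  have hcrit := hmax.hasDerivAt_eq_zero hf.self_of_nhds
  have hconc := hmax.secondDeriv_nonpos hf hf'
  have hz1 : z ^ (m - 1) = z ^ m / z := rpow_sub_one hz.ne' m
  have hz2 : z ^ (m - 1 - 1) = z ^ m / z ^ 2 := by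
    rw [rpow_sub_one hz.ne', hz1, div_div, sq]
  rw [hz1] at hcrit
  rw [hz2] at hconc
  constructor
  · field_simp at hcrit ⊢
    linarith
  · have := mul_le_mul_of_nonneg_left hconc (sq_nonneg z)
    field_simp at this ⊢
    linarith

theorem rpow_le_tangent {p b c : ℝ} (hp0 : 0 ≤ p) (hp1 : p ≤ 1) (hb : 0 < b) (hc : 0 ≤ c) :
    c ^ p ≤ b ^ p + p * b ^ (p - 1) * (c - b) := by
  have hs : -1 ≤ c / b - 1 := by linarith [div_nonneg hc hb.le]
  have hbernoulli := rpow_one_add_le_one_add_mul_self hs hp0 hp1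
  have hc_eq : c = b * (1 + (c / b - 1)) := by field_simp; ring
  calc c ^ p = b ^ p * (1 + (c / b - 1)) ^ p := by
        rw [← mul_rpow hb.le (by linarith), ← hc_eq]
    _ ≤ b ^ p * (1 + p * (c / b - 1)) := mul_le_mul_of_nonneg_left hbernoulli (by positivity)
    _ = b ^ p + p * b ^ (p - 1) * (c - b) := by rw [rpow_sub_one hb.ne']; field_simp

-- The supremum is attained at the unconstrained maximiser `c = y ^ (1 / (p - 1))`.
theorem G_eq_of_le_rpow {p u y : ℝ} (hp0 : 0 < p) (hp1 : p < 1) (hy : 0 < y) (hu : 0 ≤ u)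
    (hub : u ≤ y ^ (1 / (p - 1))) :
    G p u y = (1 - p) / p * y ^ (p / (p - 1)) := by
  have hp1' : p - 1 ≠ 0 := by linarith
  set b := y ^ (1 / (p - 1)) with hb
  have hbpos : 0 < b := rpow_pos_of_pos hy _
  have hbp : b ^ p = y ^ (p / (p - 1)) := by
    rw [hb, ← rpow_mul hy.le]; congr 1; field_simp
  have hbp1 : b ^ (p - 1) = y := by
    rw [hb, ← rpow_mul hy.le, one_div_mul_cancel hp1', rpow_one]
  have hby : b * y = y ^ (p / (p - 1)) := by
    rw [hb, ← rpow_add_one hy.ne']; congr 1; field_simp; ring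
  have hval : b ^ p / p - b * y = (1 - p) / p * y ^ (p / (p - 1)) := by
    rw [hbp, hby]; field_simp
  refine IsGreatest.csSup_eq ⟨⟨b, hub, hval⟩, ?_⟩
  rintro _ ⟨c, hc, rfl⟩
  have htangent := rpow_le_tangent hp0.le hp1.le hbpos (hu.trans hc)
  rw [hbp1] at htangent
  rw [← hval]
  have : c ^ p / p ≤ b ^ p / p + y * (c - b) := by
    rw [div_le_iff₀ hp0, add_mul, div_mul_cancel₀ _ hp0.ne']; linarith
  linarith

theorem G_eq_of_lt_add_rpow {p k l w y : ℝ} (hp0 : 0 < p) (hp1 : p < 1) (hk : 0 < k)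
    (hy : 0 < y) (hu : 0 ≤ -k * w + l) (hw : l / k < w + y ^ (1 / (p - 1)) / k) :
    G p (-k * w + l) y = (1 - p) / p * y ^ (p / (p - 1)) := by
  refine G_eq_of_le_rpow hp0 hp1 hy hu ?_
  have := mul_lt_mul_of_pos_right hw hk
  rw [add_mul, div_mul_cancel₀ _ hk.ne', div_mul_cancel₀ _ hk.ne'] at this
  linarith

theorem unconstrained_dual_ode_deriv {p β a r z : ℝ} {v : ℝ → ℝ} (hp0 : p ≠ 0) (hp1 : p ≠ 1)
    (hz : 0 < z) (hv₁ : HasDerivAt v (deriv v z) z)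
    (hv₂ : HasDerivAt (deriv v) (deriv (deriv v) z) z)
    (hv₃ : HasDerivAt (deriv (deriv v)) (deriv (deriv (deriv v)) z) z)
    (hODE : ∀ᶠ t in 𝓝 z, β * (v t - t * deriv v t) - a * t ^ 2 * deriv (deriv v) t
      - (1 - p) / p * t ^ (p / (p - 1)) + r * t * deriv v t = 0) :
    (r - β - 2 * a) * (z * deriv (deriv v) z) - a * (z ^ 2 * deriv (deriv (deriv v)) z)
      + z ^ (1 / (p - 1)) + r * deriv v z = 0 := by
  have hp1' : p - 1 ≠ 0 := sub_ne_zero.2 hp1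
  have hF : HasDerivAt (fun t => β * (v t - t * deriv v t) - a * t ^ 2 * deriv (deriv v) t
      - (1 - p) / p * t ^ (p / (p - 1)) + r * t * deriv v t)
      (β * (deriv v z - (1 * deriv v z + z * deriv (deriv v) z))
        - (a * (↑2 * z ^ (2 - 1)) * deriv (deriv v) z + a * z ^ 2 * deriv (deriv (deriv v)) z)
        - (1 - p) / p * (p / (p - 1) * z ^ (p / (p - 1) - 1))
        + (r * 1 * deriv v z + r * z * deriv (deriv v) z)) z := by
    have hpow := hasDerivAt_rpow_const (p := p / (p - 1)) (Or.inl hz.ne')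
    exact (((hv₁.sub ((hasDerivAt_id' z).mul hv₂)).const_mul β).sub
      (((hasDerivAt_pow 2 z).const_mul a).mul hv₃) |>.sub (hpow.const_mul _)).add
      (((hasDerivAt_id' z).const_mul r).mul hv₂)
  have hconst : (fun t => β * (v t - t * deriv v t) - a * t ^ 2 * deriv (deriv v) t
      - (1 - p) / p * t ^ (p / (p - 1)) + r * t * deriv v t) =ᶠ[𝓝 z] fun _ => 0 := hODE
  have hzero := hF.deriv.symm.trans (hconst.deriv_eq.trans (deriv_const z 0))
  have hexp : p / (p - 1) - 1 = 1 / (p - 1) := by field_simp; ring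
  have hcoef : (1 - p) / p * (p / (p - 1)) = -1 := by field_simp; ring
  rw [hexp] at hzero
  linear_combination hzero + z ^ (1 / (p - 1)) * hcoef

theorem differentiated_dual_ode_pos {p β a r k l Y x₁ x₂ x₃ : ℝ} (hp1 : p ≠ 1) (ha : 0 ≤ a)
    (hr : 0 < r) (hk : 0 < k) (hl : 0 < l) (hY : 0 < Y)
    (hκk : (β - p * (a / (1 - p) + r)) / (1 - p) < k)
    (h₁ : (l - Y) / k < x₁) (h₂ : x₂ = -(1 / (p - 1) / k) * Y)
    (h₃ : x₃ ≤ -(1 / (p - 1) * (1 / (p - 1) - 1) / k) * Y) :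
    0 < (r - β - 2 * a) * x₂ - a * x₃ + Y + r * x₁ := by
  -- substituting the bounds on `x₁, x₂, x₃` leaves `(r l + (k - κ) Y) / k`
  have hs : 1 - p ≠ 0 := sub_ne_zero.2 hp1.symm
  have hkey : (r - β - 2 * a) * (-(1 / (p - 1) / k) * Y)
      - a * (-(1 / (p - 1) * (1 / (p - 1) - 1) / k) * Y) + Y + r * ((l - Y) / k)
      = (r * l + (k - (β - p * (a / (1 - p) + r)) / (1 - p)) * Y) / k := by
    have : p - 1 ≠ 0 := sub_ne_zero.2 hp1
    field_simp
    ring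
  have hpos : 0 < (r * l + (k - (β - p * (a / (1 - p) + r)) / (1 - p)) * Y) / k := by
    have := mul_pos (sub_pos.2 hκk) hY
    positivity
  subst h₂
  linarith [mul_le_mul_of_nonneg_left h₃ ha, mul_lt_mul_of_pos_left h₁ hr]

theorem IsLocalMax.le_of_unconstrained_dual_ode {p β a r k l z : ℝ} {v : ℝ → ℝ} {s : Set ℝ}
    (hmax : IsLocalMax (fun t => deriv v t + t ^ (1 / (p - 1)) / k) z)
    (hp0 : p ≠ 0) (hp1 : p ≠ 1) (ha : 0 ≤ a) (hr : 0 < r) (hk : 0 < k) (hl : 0 < l)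
    (hκk : (β - p * (a / (1 - p) + r)) / (1 - p) < k)
    (hv : ContDiffOn ℝ 3 v s) (hs : IsOpen s) (hz : 0 < z) (hzs : z ∈ s)
    (hODE : ∀ᶠ t in 𝓝 z, β * (v t - t * deriv v t) - a * t ^ 2 * deriv (deriv v) t
      - (1 - p) / p * t ^ (p / (p - 1)) + r * t * deriv v t = 0) :
    deriv v z + z ^ (1 / (p - 1)) / k ≤ l / k := by
  have hv₂ : ContDiffOn ℝ 2 (deriv v) s := hv.deriv_of_isOpen hs (by norm_num)
  have hv₃ : ContDiffOn ℝ 1 (deriv (deriv v)) s := hv₂.deriv_of_isOpen hs (by norm_num)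
  obtain ⟨hz₂, hz₃⟩ := hmax.mul_deriv_eq_and_sq_mul_deriv_deriv_le hk hz
    (eventually_of_mem (hs.mem_nhds hzs) fun t ht => hv₂.hasDerivAt_deriv hs two_ne_zero ht)
    (hv₃.hasDerivAt_deriv hs one_ne_zero hzs)
  have hode := unconstrained_dual_ode_deriv hp0 hp1 hz (hv.hasDerivAt_deriv hs three_ne_zero hzs)
    (hv₂.hasDerivAt_deriv hs two_ne_zero hzs) (hv₃.hasDerivAt_deriv hs one_ne_zero hzs) hODE
  by_contra! hgz
  have := differentiated_dual_ode_pos (x₁ := deriv v z) hp1 ha hr hk hl (rpow_pos_of_pos hz _)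
    hκk (by rw [sub_div]; exact sub_lt_iff_lt_add.2 hgz) hz₂ hz₃
  linarith

theorem stmt_10_general (p μ σ β r k l : ℝ) (hp0 : 0 < p) (hp1 : p < 1)
    (hl : 0 < l) (hk : 0 < k) (hkr : k < r)
    (hκk : (β - p * (μ ^ 2 / (2 * σ ^ 2 * (1 - p)) + r)) / (1 - p) < k)
    (v : ℝ → ℝ) (hv : ContDiffOn ℝ 3 v (Ioi 0))
    (hv' : ∀ y ∈ Ioi (0 : ℝ), deriv v y < -(l / (r - k)))
    (hODE : ∀ y ∈ Ioi (0 : ℝ),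
      β * (v y - y * deriv v y) - μ ^ 2 / (2 * σ ^ 2) * y ^ 2 * deriv (deriv v) y
        - G p (-k * deriv v y + l) y + r * y * deriv v y = 0)
    (y₀ y₁ : ℝ) (hy₀ : 0 < y₀)
    (htail : ∀ y : ℝ, (0 < y ∧ y ≤ y₀) ∨ y₁ ≤ y →
      deriv v y ≤ -(1 / k) * y ^ (1 / (p - 1)) + l / k) :
    ∀ y : ℝ, 0 < y → deriv v y ≤ -(1 / k) * y ^ (1 / (p - 1)) + l / k := by
  set g : ℝ → ℝ := fun t => deriv v t + t ^ (1 / (p - 1)) / k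
  have hg_le : ∀ t, deriv v t ≤ -(1 / k) * t ^ (1 / (p - 1)) + l / k ↔ g t ≤ l / k := fun t => by
    rw [neg_mul, one_div_mul_eq_div, neg_add_eq_sub, le_sub_iff_add_le]
  have hg_cont : ∀ t, 0 < t → ContinuousAt g t := fun t ht =>
    ((hv.continuousOn_deriv_of_isOpen isOpen_Ioi (by norm_num)).continuousAt
      (isOpen_Ioi.mem_nhds ht)).add ((continuousAt_rpow_const _ _ (Or.inl ht.ne')).div_const k)
  intro y hy
  by_contra! hcon
  have hy_mem : y ∈ Icc y₀ y₁ :=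
    ⟨le_of_not_gt fun h => (htail y (Or.inl ⟨hy, h.le⟩)).not_gt hcon,
      le_of_not_ge fun h => (htail y (Or.inr h)).not_gt hcon⟩
  obtain ⟨z, ⟨hy₀z, -⟩, hmax, hgz⟩ := exists_isLocalMax_gt_of_le_endpoints
    (fun t ht => (hg_cont t (hy₀.trans_le ht.1)).continuousWithinAt)
    ((hg_le y₀).1 (htail y₀ (Or.inl ⟨hy₀, le_rfl⟩))) ((hg_le y₁).1 (htail y₁ (Or.inr le_rfl)))
    hy_mem (lt_of_not_ge ((hg_le y).not.1 hcon.not_ge))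
  have hz : 0 < z := hy₀.trans hy₀z
  have hu : ∀ t ∈ Ioi (0 : ℝ), 0 ≤ -k * deriv v t + l := fun t ht => by
    have := (hv' t ht).trans (neg_neg_of_pos (div_pos hl (sub_pos.2 hkr)))
    nlinarith
  have hunconstrained : ∀ᶠ t in 𝓝 z, β * (v t - t * deriv v t)
      - μ ^ 2 / (2 * σ ^ 2) * t ^ 2 * deriv (deriv v) t
      - (1 - p) / p * t ^ (p / (p - 1)) + r * t * deriv v t = 0 := by
    filter_upwards [eventually_gt_nhds hz, (hg_cont z hz).eventually_const_lt hgz] with t ht hgt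
    rw [← G_eq_of_lt_add_rpow hp0 hp1 hk ht (hu t ht) hgt]
    exact hODE t ht
  refine (hmax.le_of_unconstrained_dual_ode hp0.ne' hp1.ne (by positivity) (hk.trans hkr) hk hl
    ?_ hv isOpen_Ioi hz hz hunconstrained).not_gt hgz
  rwa [← div_div] at hκk

/-- small discount factor case (`0 < κ < k`). If a convex `C³` solution `v`
of the dual ODE with `v' < -l/(r-k)` satisfies
`v'(y) ≤ -(1/k) y^(1/(p-1)) + l/k` for all small and all large `y`, then this inequality
holds for all `y > 0`. -/
theorem stmt_10 (p μ σ β r k l : ℝ) (hp0 : 0 < p) (hp1 : p < 1) (hμ : 0 < μ) (hσ : 0 < σ)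
    (hβ : 0 < β) (hl : 0 < l) (hk : 0 < k) (hkr : k < r)
    (hκ0 : 0 < (β - p * (μ ^ 2 / (2 * σ ^ 2 * (1 - p)) + r)) / (1 - p))
    (hκk : (β - p * (μ ^ 2 / (2 * σ ^ 2 * (1 - p)) + r)) / (1 - p) < k)
    (v : ℝ → ℝ) (hv : ContDiffOn ℝ 3 v (Ioi 0))
    (hconv : ConvexOn ℝ (Ioi 0) v)
    (hv' : ∀ y ∈ Ioi (0 : ℝ), deriv v y < -(l / (r - k)))
    (hODE : ∀ y ∈ Ioi (0 : ℝ),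
      β * (v y - y * deriv v y) - μ ^ 2 / (2 * σ ^ 2) * y ^ 2 * deriv (deriv v) y
        - G p (-k * deriv v y + l) y + r * y * deriv v y = 0)
    (y₀ y₁ : ℝ) (hy₀ : 0 < y₀) (hy₀₁ : y₀ ≤ y₁)
    (htail : ∀ y : ℝ, (0 < y ∧ y ≤ y₀) ∨ y₁ ≤ y →
      deriv v y ≤ -(1 / k) * y ^ (1 / (p - 1)) + l / k) :
    ∀ y : ℝ, 0 < y → deriv v y ≤ -(1 / k) * y ^ (1 / (p - 1)) + l / k :=
  stmt_10_general p μ σ β r k l hp0 hp1 hl hk hkr hκk v hv hv' hODE y₀ y₁ hy₀ htail
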